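/- For every integer i ≥ 2, the Vega graph Υ_i^{00} is triangle-free and has chromatic number 4. -/

import Mathlib

open Finset

/-- Base adjacency relation for the Vega graph: vertices are the vertices of the
Andrasfai graph (inl) together with x,y,a,b,c,u,v,w coded as inr 0,...,inr 7. -/
def vegaBase (i : ℕ) : (Fin (3 * i - 1) ⊕ Fin 8) → (Fin (3 * i - 1) ⊕ Fin 8) → Prop
  | Sum.inl j, Sum.inl l =>
      (l.val + (3 * i - 1) - j.val) % (3 * i - 1) ∈ Finset.Icc i (2 * i - 1)
  | Sum.inr h, Sum.inl j =>
      ((h = 2 ∨ h = 5) ∧ j.val < i) ∨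
      ((h = 3 ∨ h = 6) ∧ i ≤ j.val ∧ j.val < 2 * i) ∨
      ((h = 4 ∨ h = 7) ∧ 2 * i ≤ j.val)
  | Sum.inl _, Sum.inr _ => False
  | Sum.inr h, Sum.inr h' =>
      (h = 0 ∧ h' = 1) ∨ (h = 2 ∧ h' = 6) ∨ (h = 6 ∧ h' = 4) ∨ (h = 4 ∧ h' = 5) ∨
      (h = 5 ∧ h' = 3) ∨ (h = 3 ∧ h' = 7) ∨ (h = 7 ∧ h' = 2) ∨
      (h = 0 ∧ h' = 2) ∨ (h = 0 ∧ h' = 3) ∨ (h = 0 ∧ h' = 4) ∨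
      (h = 1 ∧ h' = 5) ∨ (h = 1 ∧ h' = 6) ∨ (h = 1 ∧ h' = 7)

/-- The Vega graph Υ_i^{00}. -/
def vega (i : ℕ) : SimpleGraph (Fin (3 * i - 1) ⊕ Fin 8) where
  Adj z z' := z ≠ z' ∧ (vegaBase i z z' ∨ vegaBase i z' z)
  symm := ⟨fun _ _ h => ⟨h.1.symm, h.2.symm⟩⟩
  loopless := ⟨fun _ h => h.1 rfl⟩

/-- The weight ω_{00}. -/
def vegaW00 (i : ℕ) : (Fin (3 * i - 1) ⊕ Fin 8) → ℤ
  | Sum.inl j => if j.val = 0 ∨ j.val = 2 * i - 1 then 1 else 3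
  | Sum.inr h => if h = 0 ∨ h = 1 then 1
      else if h = 4 ∨ h = 7 then 3 * (i : ℤ) - 3 else 3 * (i : ℤ) - 2

/-- The correction function f (1 on u,v,w,y; -1 on x). -/
def vegaF (i : ℕ) : (Fin (3 * i - 1) ⊕ Fin 8) → ℤ
  | Sum.inl _ => 0
  | Sum.inr h => if h = 1 ∨ h = 5 ∨ h = 6 ∨ h = 7 then 1 else if h = 0 then -1 else 0

/-- The correction function g (1 on b, v, v_{i-1}, v_{2i-1}; -1 on v_0). -/
def vegaG (i : ℕ) : (Fin (3 * i - 1) ⊕ Fin 8) → ℤ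
  | Sum.inl j => if j.val = i - 1 ∨ j.val = 2 * i - 1 then 1
      else if j.val = 0 then -1 else 0
  | Sum.inr h => if h = 3 ∨ h = 6 then 1 else 0

/-- The weight ω_{μν} = ω_{00} - μ f - ν g. -/
def vegaW (i μ ν : ℕ) (z : Fin (3 * i - 1) ⊕ Fin 8) : ℤ :=
  vegaW00 i z - μ * vegaF i z - ν * vegaG i z

/-- The blow-up of a graph `F` with class sizes given by `w`. -/
def SimpleGraph.blowup {α : Type*} (F : SimpleGraph α) (w : α → ℕ) :
    SimpleGraph (Σ a, Fin (w a)) where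
  Adj x y := F.Adj x.1 y.1
  symm := ⟨fun _ _ h => F.symm.symm _ _ h⟩
  loopless := ⟨fun x h => F.loopless.irrefl x.1 h⟩

/-! Two steps whose lengths lie in `[i, 2i)` never add up to a third one, so the Andrásfai graph
is triangle-free, and each of its parts `[0, i)`, `[i, 2i)`, `[2i, 3i - 1)` is independent.
Every gadget vertex other than `x, y` is joined to exactly one part, and adjacent gadget vertices
to different parts; this rules out the remaining triangles, and colouring the parts `0, 1, 2`
extends to a 4-colouring. Conversely `Υ_i^{00}` contains the Grötzsch graph, the Mycielskian of
`C₅`, and the Mycielskian of a graph that is not `n`-colourable is not `(n + 1)`-colourable. -/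

namespace SimpleGraph

variable {V : Type*}

/-- `some (inl v)` is the vertex `v` of `G`, `some (inr v)` its shadow and `none` the apex. -/
def mycielskian (G : SimpleGraph V) : SimpleGraph (Option (V ⊕ V)) where
  Adj
    | some (.inl v), some (.inl w) => G.Adj v w
    | some (.inl v), some (.inr w) => G.Adj v w
    | some (.inr v), some (.inl w) => G.Adj v w
    | none, some (.inr _) => True
    | some (.inr _), none => True
    | _, _ => False
  symm := ⟨by
    rintro (_ | v | v) (_ | w | w) h <;> first | trivial | exact h.symm⟩
  loopless := ⟨by
    rintro (_ | v | v) h <;> first | exact h | exact G.loopless.irrefl v h⟩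

@[simp] theorem mycielskian_adj_inl_inl {G : SimpleGraph V} {v w : V} :
    G.mycielskian.Adj (some (.inl v)) (some (.inl w)) ↔ G.Adj v w := Iff.rfl

@[simp] theorem mycielskian_adj_inl_inr {G : SimpleGraph V} {v w : V} :
    G.mycielskian.Adj (some (.inl v)) (some (.inr w)) ↔ G.Adj v w := Iff.rfl

@[simp] theorem mycielskian_adj_inr_inl {G : SimpleGraph V} {v w : V} :
    G.mycielskian.Adj (some (.inr v)) (some (.inl w)) ↔ G.Adj v w := Iff.rfl

theorem not_colorable_mycielskian {G : SimpleGraph V} {n : ℕ} (hG : ¬G.Colorable n) :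
    ¬G.mycielskian.Colorable (n + 1) := by
  rintro ⟨C⟩
  have hshadow (v : V) : C (some (.inr v)) ≠ C none :=
    C.valid (G := G.mycielskian) (v := some (.inr v)) (w := none) trivial
  -- Recolour every vertex that shares the apex colour with the colour of its shadow.
  let D : G.Coloring {c // c ≠ C none} := Coloring.mk
    (fun v => if h : C (some (.inl v)) = C none then ⟨_, hshadow v⟩ else ⟨_, h⟩) <| by
      intro v w hvw
      have hinl : C (some (.inl v)) ≠ C (some (.inl w)) := C.valid (G := G.mycielskian) hvw
      have hinr_inl : C (some (.inr v)) ≠ C (some (.inl w)) := C.valid (G := G.mycielskian) hvw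
      have hinl_inr : C (some (.inl v)) ≠ C (some (.inr w)) := C.valid (G := G.mycielskian) hvw
      split_ifs with hv hw hw <;> simp only [ne_eq, Subtype.mk.injEq]
      · exact absurd (hv.trans hw.symm) hinl
      · exact hinr_inl
      · exact hinl_inr
      · exact hinl
  exact hG (by simpa using D.colorable)

end SimpleGraph

open Sum SimpleGraph

section Vega

variable {i : ℕ}

theorem vegaBase_inl_inl_iff {j l : Fin (3 * i - 1)} :
    vegaBase i (inl j) (inl l) ↔
      (i ≤ l - j ∧ l - j < 2 * i) ∨ (i ≤ j - l ∧ j - l < 2 * i) := by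
  have hj := j.isLt
  have hl := l.isLt
  simp only [vegaBase, Finset.mem_Icc]
  rcases le_or_gt (j : ℕ) l with hjl | hlj
  · rw [show (l : ℕ) + (3 * i - 1) - j = l - j + (3 * i - 1) by omega, Nat.add_mod_right,
      Nat.mod_eq_of_lt (by omega)]
    omega
  · rw [Nat.mod_eq_of_lt (by omega)]
    omega

theorem vega_adj_inl_inl {j l : Fin (3 * i - 1)} :
    (vega i).Adj (inl j) (inl l) ↔
      (i ≤ l - j ∧ l - j < 2 * i) ∨ (i ≤ j - l ∧ j - l < 2 * i) := by
  simp only [vega, ne_eq, inl.injEq, vegaBase_inl_inl_iff]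
  constructor
  · rintro ⟨-, h | h⟩ <;> omega
  · intro h
    refine ⟨fun hjl => ?_, Or.inl h⟩
    subst hjl
    omega

def andrasfaiPart (i j : ℕ) : ℕ := if j < i then 0 else if j < 2 * i then 1 else 2

theorem andrasfaiPart_lt_three (i j : ℕ) : andrasfaiPart i j < 3 := by
  unfold andrasfaiPart; split_ifs <;> omega

theorem andrasfaiPart_ne_of_adj {j l : Fin (3 * i - 1)} (h : (vega i).Adj (inl j) (inl l)) :
    andrasfaiPart i j ≠ andrasfaiPart i l := by
  rw [vega_adj_inl_inl] at h
  unfold andrasfaiPart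
  split_ifs <;> omega

def vegaGadgetEdges : Finset (Sym2 (Fin 8)) :=
  {s(0, 1), s(0, 2), s(0, 3), s(0, 4), s(1, 5), s(1, 6), s(1, 7),
    s(2, 6), s(6, 4), s(4, 5), s(5, 3), s(3, 7), s(7, 2)}

theorem vega_adj_inr_inr {h h' : Fin 8} :
    (vega i).Adj (inr h) (inr h') ↔ s(h, h') ∈ vegaGadgetEdges := by
  simp only [vega, vegaBase, ne_eq, inr.injEq]
  revert h h'
  decide

/-- The Andrásfai part that a gadget vertex is joined to, if any. -/
def vegaGadgetPart : Fin 8 → Option ℕ :=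
  ![none, none, some 0, some 1, some 2, some 0, some 1, some 2]

theorem vega_adj_inr_inl {h : Fin 8} {j : Fin (3 * i - 1)} :
    (vega i).Adj (inr h) (inl j) ↔ vegaGadgetPart h = some (andrasfaiPart i j) := by
  have hj := j.isLt
  simp only [vega, ne_eq, reduceCtorEq, not_false_eq_true, true_and, vegaBase, or_false]
  unfold andrasfaiPart
  fin_cases h <;> simp [vegaGadgetPart] <;> split_ifs <;> simp <;> omega

theorem vega_adj_inl_inr {h : Fin 8} {j : Fin (3 * i - 1)} :
    (vega i).Adj (inl j) (inr h) ↔ vegaGadgetPart h = some (andrasfaiPart i j) :=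
  (vega i).adj_comm _ _ |>.trans vega_adj_inr_inl

theorem vegaGadget_triangle_free : ∀ h₁ h₂ h₃ : Fin 8, s(h₁, h₂) ∈ vegaGadgetEdges →
    s(h₁, h₃) ∈ vegaGadgetEdges → s(h₂, h₃) ∉ vegaGadgetEdges := by
  decide

theorem vegaGadgetPart_eq_none_of_mem_edges : ∀ h h' : Fin 8, s(h, h') ∈ vegaGadgetEdges →
    vegaGadgetPart h = vegaGadgetPart h' → vegaGadgetPart h = none := by
  decide

theorem not_adj_inl_of_adj_inl_inl {j l m : Fin (3 * i - 1)} (hjl : (vega i).Adj (inl j) (inl l))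
    (hjm : (vega i).Adj (inl j) (inl m)) : ¬(vega i).Adj (inl l) (inl m) := by
  rw [vega_adj_inl_inl] at *
  omega

theorem not_adj_inr_of_adj_inl_inl {j l : Fin (3 * i - 1)} {h : Fin 8}
    (hjl : (vega i).Adj (inl j) (inl l)) (hj : (vega i).Adj (inr h) (inl j)) :
    ¬(vega i).Adj (inr h) (inl l) := by
  rw [vega_adj_inr_inl] at *
  rw [hj, Option.some_inj]
  exact andrasfaiPart_ne_of_adj hjl

theorem not_adj_inl_of_adj_inr_inr {h h' : Fin 8} {j : Fin (3 * i - 1)}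
    (hh' : (vega i).Adj (inr h) (inr h')) (hj : (vega i).Adj (inr h) (inl j)) :
    ¬(vega i).Adj (inr h') (inl j) := by
  rw [vega_adj_inr_inl, vega_adj_inr_inr] at *
  intro hj'
  simpa [hj] using vegaGadgetPart_eq_none_of_mem_edges h h' hh' (hj.trans hj'.symm)

theorem vega_cliqueFree_three (i : ℕ) : (vega i).CliqueFree 3 := by
  intro s hs
  obtain ⟨z₁, z₂, z₃, h₁₂, h₁₃, h₂₃, -⟩ := is3Clique_iff.mp hs
  rcases z₁ with j₁ | h₁ <;> rcases z₂ with j₂ | h₂ <;> rcases z₃ with j₃ | h₃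
  · exact not_adj_inl_of_adj_inl_inl h₁₂ h₁₃ h₂₃
  · exact not_adj_inr_of_adj_inl_inl h₁₂ h₁₃.symm h₂₃.symm
  · exact not_adj_inr_of_adj_inl_inl h₁₃ h₁₂.symm h₂₃
  · exact not_adj_inl_of_adj_inr_inr h₂₃ h₁₂.symm h₁₃.symm
  · exact not_adj_inr_of_adj_inl_inl h₂₃ h₁₂ h₁₃
  · exact not_adj_inl_of_adj_inr_inr h₁₃ h₁₂ h₂₃.symm
  · exact not_adj_inl_of_adj_inr_inr h₁₂ h₁₃ h₂₃
  · rw [vega_adj_inr_inr] at h₁₂ h₁₃ h₂₃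
    exact vegaGadget_triangle_free h₁ h₂ h₃ h₁₂ h₁₃ h₂₃

def vegaGadgetColor : Fin 8 → ℕ := ![0, 1, 3, 3, 3, 2, 0, 0]

theorem vegaGadgetColor_lt_four : ∀ h, vegaGadgetColor h < 4 := by decide

theorem vegaGadgetPart_ne_some_color : ∀ h, vegaGadgetPart h ≠ some (vegaGadgetColor h) := by
  decide

theorem vegaGadgetColor_ne_of_mem_edges : ∀ h h' : Fin 8, s(h, h') ∈ vegaGadgetEdges →
    vegaGadgetColor h ≠ vegaGadgetColor h' := by
  decide

theorem vega_colorable_four (i : ℕ) : (vega i).Colorable 4 := by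
  rw [colorable_iff_exists_bdd_nat_coloring]
  refine ⟨Coloring.mk (Sum.elim (fun j => andrasfaiPart i j) vegaGadgetColor) ?_, ?_⟩
  · rintro (j | h) (l | h') hadj
    · exact andrasfaiPart_ne_of_adj hadj
    · intro (hc : andrasfaiPart i j = vegaGadgetColor h')
      exact vegaGadgetPart_ne_some_color h' (hc ▸ vega_adj_inr_inl.mp hadj.symm)
    · intro (hc : vegaGadgetColor h = andrasfaiPart i l)
      exact vegaGadgetPart_ne_some_color h (hc ▸ vega_adj_inr_inl.mp hadj)
    · exact vegaGadgetColor_ne_of_mem_edges h h' (vega_adj_inr_inr.mp hadj)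
  · rintro (j | h)
    · exact (andrasfaiPart_lt_three i j).trans (by norm_num)
    · exact vegaGadgetColor_lt_four h

/-- The Grötzsch graph `μ(C₅)` inside `Υ_i^{00}`: the 5-cycle is `b, u, c, v_{2i}, v_i`,
with shadows `v_0, x, v_{i-1}, v, w` and apex `a`. -/
def mycielskianCycleToVega (hi : 2 ≤ i) : (cycleGraph 5).mycielskian →g vega i where
  toFun
    | none => inr 2
    | some (inl k) => ![inr 3, inr 5, inr 4, inl ⟨2 * i, by omega⟩, inl ⟨i, by omega⟩] k
    | some (inr k) => ![inl ⟨0, by omega⟩, inr 0, inl ⟨i - 1, by omega⟩, inr 6, inr 7] k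
  map_rel' := by
    rintro (_ | (k | k)) (_ | (l | l)) hkl <;> (try fin_cases k) <;> (try fin_cases l) <;>
      (try simp only [mycielskian_adj_inl_inl, mycielskian_adj_inl_inr,
        mycielskian_adj_inr_inl] at hkl) <;>
      first | exact absurd hkl (by decide) | exact (hkl : False).elim | skip
    all_goals simp [vega_adj_inl_inl, vega_adj_inr_inl, vega_adj_inl_inr, vega_adj_inr_inr,
      vegaGadgetPart, andrasfaiPart]
    all_goals first | decide | omega

theorem cycleGraph_five_not_colorable_two : ¬(cycleGraph 5).Colorable 2 :=
  (chromaticNumber_eq_iff_colorable_not_colorable.mp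
    (chromaticNumber_cycleGraph_of_odd 5 (by norm_num) (by decide))).2

theorem vega_not_colorable_three (hi : 2 ≤ i) : ¬(vega i).Colorable 3 := fun h =>
  not_colorable_mycielskian cycleGraph_five_not_colorable_two
    (h.of_hom (mycielskianCycleToVega hi))

end Vega

/-- For every i ≥ 2, the Vega graph Υ_i^{00} is triangle-free and has chromatic
number 4. -/
theorem stmt_17 (i : ℕ) (hi : 2 ≤ i) :
    (vega i).CliqueFree 3 ∧ (vega i).chromaticNumber = 4 :=
  ⟨vega_cliqueFree_three i, chromaticNumber_eq_iff_colorable_not_colorable.mpr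
    ⟨vega_colorable_four i, vega_not_colorable_three hi⟩⟩
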